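/- Let F be a nonempty irreducible topological space, Y a topological space, and let π : E → Y be the projection of a locally trivial fiber bundle with model fiber F (every point of Y has a neighborhood U with a homeomorphism π⁻¹(U) ≅ U × F commuting with the projections). Then the map D ↦ π⁻¹(D) is a bijection from the set of irreducible components of Y onto the set of irreducible components of E. -/

import Mathlib

open Set

/-- Lemma 2.10 of the paper: if `π : E → Y` is the projection of a locally trivial
fiber bundle whose model fiber `F` is a nonempty irreducible topological space, then
`D ↦ π ⁻¹' D` is a bijection from the set of irreducible components of `Y` onto the
set of irreducible components of `E`. -/
theorem fiberBundle_irreducibleComponents_bijOn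
    {E Y F : Type*} [TopologicalSpace E] [TopologicalSpace Y] [TopologicalSpace F]
    [IrreducibleSpace F]
    (π : E → Y) (hcont : Continuous π)
    (htriv : ∀ y : Y, ∃ U : Set Y, IsOpen U ∧ y ∈ U ∧
      ∃ h : (π ⁻¹' U) ≃ₜ (U × F), ∀ e : π ⁻¹' U, ((h e).1 : Y) = π e) :
    Set.BijOn (fun D => π ⁻¹' D) (irreducibleComponents Y) (irreducibleComponents E) := by
  -- π is surjective
  have hsurj : Function.Surjective π := by
    intro y
    obtain ⟨U, hUo, hyU, h, hcomm⟩ := htriv y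
    obtain ⟨f⟩ : Nonempty F := inferInstance
    refine ⟨(h.symm (⟨y, hyU⟩, f) : π ⁻¹' U), ?_⟩
    have := hcomm (h.symm (⟨y, hyU⟩, f))
    rw [h.apply_symm_apply] at this
    exact this.symm
  -- π is an open map
  have hopen : IsOpenMap π := by
    intro V hV
    rw [isOpen_iff_forall_mem_open]
    rintro y ⟨e, heV, rfl⟩
    obtain ⟨U, hUo, hyU, h, hcomm⟩ := htriv (π e)
    refine ⟨Subtype.val '' (Prod.fst '' (h '' (Subtype.val ⁻¹' V))), ?_, ?_, ?_⟩
    · rintro _ ⟨u, ⟨p, ⟨w, hwV, rfl⟩, rfl⟩, rfl⟩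
      exact ⟨w, hwV, (hcomm w).symm⟩
    · exact hUo.isOpenMap_subtype_val _
        (isOpenMap_fst _ (h.isOpenMap _ (hV.preimage continuous_subtype_val)))
    · exact ⟨(h ⟨e, hyU⟩).1, ⟨h ⟨e, hyU⟩, ⟨⟨e, hyU⟩, heV, rfl⟩, rfl⟩, hcomm ⟨e, hyU⟩⟩
  -- each fiber of π is irreducible
  have hfiber : ∀ y : Y, IsIrreducible (π ⁻¹' {y}) := by
    intro y
    obtain ⟨U, hUo, hyU, h, hcomm⟩ := htriv y
    have key : π ⁻¹' {y} =
        Subtype.val '' (h.symm '' ((fun f : F => ((⟨y, hyU⟩ : U), f)) '' univ)) := by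
      ext e
      simp only [mem_preimage, mem_singleton_iff, image_univ, mem_image, mem_range,
        exists_exists_eq_and]
      constructor
      · intro he
        have heU : e ∈ π ⁻¹' U := by rw [mem_preimage, he]; exact hyU
        refine ⟨(h ⟨e, heU⟩).2, ?_⟩
        have : ((⟨y, hyU⟩ : U), (h ⟨e, heU⟩).2) = h ⟨e, heU⟩ := by
          refine Prod.ext ?_ rfl
          exact (Subtype.ext ((hcomm ⟨e, heU⟩).trans he)).symm
        rw [this, h.symm_apply_apply]
      · rintro ⟨f, rfl⟩
        have := hcomm (h.symm (⟨y, hyU⟩, f))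
        rw [h.apply_symm_apply] at this
        exact this.symm
    rw [key]
    refine IsIrreducible.image (IsIrreducible.image (IsIrreducible.image
      (IrreducibleSpace.isIrreducible_univ F) _ ?_) _ ?_) _ ?_
    · exact (Continuous.prodMk_right _).continuousOn
    · exact h.symm.continuous.continuousOn
    · exact continuous_subtype_val.continuousOn
  -- preimage of an irreducible set is irreducible
  have hpre : ∀ S : Set Y, IsIrreducible S → IsIrreducible (π ⁻¹' S) := by
    rintro S ⟨⟨y, hyS⟩, hS⟩
    constructor
    · obtain ⟨e, he⟩ := hsurj y
      exact ⟨e, by rw [mem_preimage, he]; exact hyS⟩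
    · rintro u v hu hv ⟨e₁, he₁S, he₁u⟩ ⟨e₂, he₂S, he₂v⟩
      obtain ⟨z, hzS, hzu, hzv⟩ := hS (π '' u) (π '' v) (hopen u hu) (hopen v hv)
        ⟨π e₁, he₁S, e₁, he₁u, rfl⟩ ⟨π e₂, he₂S, e₂, he₂v, rfl⟩
      obtain ⟨e₁', he₁'u, he₁'z⟩ := hzu
      obtain ⟨e₂', he₂'v, he₂'z⟩ := hzv
      obtain ⟨e, hez, heuv⟩ := (hfiber z).2 u v hu hv
        ⟨e₁', by rw [mem_preimage, he₁'z]; rfl, he₁'u⟩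
        ⟨e₂', by rw [mem_preimage, he₂'z]; rfl, he₂'v⟩
      exact ⟨e, by rw [mem_preimage, mem_singleton_iff.mp hez]; exact hzS, heuv⟩
  constructor
  · -- maps to
    intro D hD
    refine ⟨hpre D hD.1, fun T hT hsub => ?_⟩
    have hDT : D ⊆ π '' T := by
      rw [← Set.image_preimage_eq D hsurj]
      exact image_mono hsub
    have hclT : IsIrreducible (closure (π '' T)) :=
      (hT.image π hcont.continuousOn).closure
    have : closure (π '' T) ⊆ D := hD.2 hclT (hDT.trans subset_closure)
    exact (subset_preimage_image π T).trans
      (preimage_mono ((subset_closure.trans this)))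
  constructor
  · -- injective
    intro D₁ _ D₂ _ hEq
    exact hsurj.preimage_injective hEq
  · -- surjective
    intro C hC
    have hCim : IsIrreducible (closure (π '' C)) :=
      (hC.1.image π hcont.continuousOn).closure
    obtain ⟨t, htpre, hsub, hmax⟩ := exists_preirreducible _ hCim.2
    have htirr : IsIrreducible t := ⟨hCim.1.mono hsub, htpre⟩
    have htmem : t ∈ irreducibleComponents Y :=
      ⟨htirr, fun u hu h2 => (hmax u hu.2 h2).le⟩
    refine ⟨t, htmem, ?_⟩
    have hCt : C ⊆ π ⁻¹' t :=
      (subset_preimage_image π C).trans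
        (preimage_mono (subset_closure.trans hsub))
    exact (hC.2 (hpre t htirr) hCt).antisymm hCt
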